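/- Let (X,d) be a compact metric space and let (X, f_{1,∞}) be a non-autonomous discrete system such that f_{1,∞} is feeble open, each f_n is surjective, (f_n) converges uniformly to a continuous map f : X → X, and the compositions (f_r^k) converge collectively to (f^k). If f_{1,∞} is multi-sensitive, then f_{1,∞} is thickly sensitive. -/

import Mathlib

open Set Filter

/-- `nds f i n` is the `n`-step composition `f_i^n = f (i+n-1) ∘ ⋯ ∘ f i`, with `nds f i 0 = id`. -/
def nds {X : Type*} (f : ℕ → X → X) (i : ℕ) : ℕ → X → X
  | 0 => id
  | n + 1 => f (i + n) ∘ nds f i n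

section TopDefs

variable {X : Type*} [TopologicalSpace X]

/-- The NDS `f_{1,∞}` is (topologically) transitive. -/
def NDSTransitive (f : ℕ → X → X) : Prop :=
  ∀ U V : Set X, IsOpen U → U.Nonempty → IsOpen V → V.Nonempty →
    ∃ n : ℕ, 0 < n ∧ (nds f 1 n '' U ∩ V).Nonempty

/-- The NDS `f_{1,∞}` is mixing. -/
def NDSMixing (f : ℕ → X → X) : Prop :=
  ∀ U V : Set X, IsOpen U → U.Nonempty → IsOpen V → V.Nonempty →
    ∃ N : ℕ, ∀ n : ℕ, N ≤ n → (nds f 1 n '' U ∩ V).Nonempty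

/-- The NDS `f_{1,∞}` is weakly mixing. -/
def NDSWeaklyMixing (f : ℕ → X → X) : Prop :=
  ∀ U₁ U₂ V₁ V₂ : Set X, IsOpen U₁ → U₁.Nonempty → IsOpen U₂ → U₂.Nonempty →
    IsOpen V₁ → V₁.Nonempty → IsOpen V₂ → V₂.Nonempty →
    ∃ n : ℕ, 0 < n ∧ (nds f 1 n '' U₁ ∩ V₁).Nonempty ∧ (nds f 1 n '' U₂ ∩ V₂).Nonempty

/-- The NDS `f_{1,∞}` is multi-transitive. -/
def NDSMultiTransitive (f : ℕ → X → X) : Prop :=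
  ∀ m : ℕ, 0 < m → ∀ U V : Fin m → Set X,
    (∀ j, IsOpen (U j)) → (∀ j, (U j).Nonempty) →
    (∀ j, IsOpen (V j)) → (∀ j, (V j).Nonempty) →
    ∃ l : ℕ, 0 < l ∧ ∀ j : Fin m, (nds f 1 (l * (j.1 + 1)) '' U j ∩ V j).Nonempty

/-- The NDS `f_{1,∞}` is totally transitive. -/
def NDSTotallyTransitive (f : ℕ → X → X) : Prop :=
  ∀ k : ℕ, 0 < k → ∀ U V : Set X, IsOpen U → U.Nonempty → IsOpen V → V.Nonempty →
    ∃ n : ℕ, 0 < n ∧ (nds f 1 (n * k) '' U ∩ V).Nonempty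

/-- The NDS `f_{1,∞}` is minimal: every orbit is dense. -/
def NDSMinimal (f : ℕ → X → X) : Prop :=
  ∀ x : X, Dense (Set.range fun n : ℕ => nds f 1 n x)

/-- The NDS `f_{1,∞}` is feeble open. -/
def FeebleOpen (f : ℕ → X → X) : Prop :=
  ∀ i : ℕ, 1 ≤ i → ∀ U : Set X, IsOpen U → U.Nonempty → (interior (f i '' U)).Nonempty

/-- A set of positive integers is syndetic (has bounded gaps). -/
def SyndeticSet (A : Set ℕ) : Prop :=
  ∃ M : ℕ, ∀ i : ℕ, 1 ≤ i → ∃ j ∈ A, i ≤ j ∧ j ≤ i + M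

/-- A set of positive integers is thick (contains arbitrarily long runs). -/
def ThickSet (A : Set ℕ) : Prop :=
  ∀ p : ℕ, ∃ n : ℕ, ∀ j : ℕ, n ≤ j → j ≤ n + p → j ∈ A

/-- The NDS `f_{1,∞}` is syndetically transitive. -/
def NDSSyndeticallyTransitive (f : ℕ → X → X) : Prop :=
  ∀ U V : Set X, IsOpen U → U.Nonempty → IsOpen V → V.Nonempty →
    SyndeticSet {n : ℕ | 0 < n ∧ (nds f 1 n '' U ∩ V).Nonempty}

/-- The NDS `f_{1,∞}` has dense periodic points. -/
def NDSDensePeriodicPoints (f : ℕ → X → X) : Prop :=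
  Dense {x : X | ∃ k : ℕ, 0 < k ∧ ∀ n : ℕ, 0 < n → nds f 1 (k * n) x = x}

/-- The NDS `f_{k,∞}` is strongly transitive. -/
def NDSStronglyTransitiveFrom (f : ℕ → X → X) (k : ℕ) : Prop :=
  ∀ U : Set X, IsOpen U → U.Nonempty →
    ∃ M : ℕ, 0 < M ∧ (⋃ i ∈ Set.Icc 1 M, nds f k i '' U) = Set.univ

/-- An autonomous map is transitive. -/
def MapTransitive {Y : Type*} [TopologicalSpace Y] (g : Y → Y) : Prop :=
  ∀ U V : Set Y, IsOpen U → U.Nonempty → IsOpen V → V.Nonempty →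
    ∃ n : ℕ, 0 < n ∧ (g^[n] '' U ∩ V).Nonempty

/-- An autonomous map is weakly mixing. -/
def MapWeaklyMixing {Y : Type*} [TopologicalSpace Y] (g : Y → Y) : Prop :=
  ∀ U₁ U₂ V₁ V₂ : Set Y, IsOpen U₁ → U₁.Nonempty → IsOpen U₂ → U₂.Nonempty →
    IsOpen V₁ → V₁.Nonempty → IsOpen V₂ → V₂.Nonempty →
    ∃ n : ℕ, 0 < n ∧ (g^[n] '' U₁ ∩ V₁).Nonempty ∧ (g^[n] '' U₂ ∩ V₂).Nonempty

/-- An autonomous map is totally transitive. -/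
def MapTotallyTransitive {Y : Type*} [TopologicalSpace Y] (g : Y → Y) : Prop :=
  ∀ k : ℕ, 0 < k → ∀ U V : Set Y, IsOpen U → U.Nonempty → IsOpen V → V.Nonempty →
    ∃ n : ℕ, 0 < n ∧ (g^[n * k] '' U ∩ V).Nonempty

/-- An autonomous map is syndetically transitive. -/
def MapSyndeticallyTransitive {Y : Type*} [TopologicalSpace Y] (g : Y → Y) : Prop :=
  ∀ U V : Set Y, IsOpen U → U.Nonempty → IsOpen V → V.Nonempty →
    SyndeticSet {n : ℕ | 0 < n ∧ (g^[n] '' U ∩ V).Nonempty}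

/-- An autonomous map is minimal. -/
def MapMinimal {Y : Type*} [TopologicalSpace Y] (g : Y → Y) : Prop :=
  ∀ x : Y, Dense (Set.range fun n : ℕ => g^[n] x)

end TopDefs

section MetricDefs

variable {X : Type*} [MetricSpace X]

/-- The compositions `(f_r^k)` converge collectively to `(f^k)` (w.r.t. the supremum metric). -/
def CollectivelyConverges (f : ℕ → X → X) (g : X → X) : Prop :=
  ∀ ε : ℝ, 0 < ε → ∃ r₀ : ℕ, ∀ r : ℕ, r₀ ≤ r → ∀ k : ℕ, 1 ≤ k → ∀ x : X,
    dist (nds f r k x) (g^[k] x) < ε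

/-- `N(U, δ)`: the times at which the NDS is `δ`-sensitive on `U`. -/
def SensSet (f : ℕ → X → X) (U : Set X) (δ : ℝ) : Set ℕ :=
  {n : ℕ | 0 < n ∧ ∃ x ∈ U, ∃ y ∈ U, δ < dist (nds f 1 n x) (nds f 1 n y)}

/-- The NDS `f_{1,∞}` is multi-sensitive. -/
def NDSMultiSensitive (f : ℕ → X → X) : Prop :=
  ∃ δ : ℝ, 0 < δ ∧ ∀ m : ℕ, 0 < m → ∀ U : Fin m → Set X,
    (∀ i, IsOpen (U i)) → (∀ i, (U i).Nonempty) → (⋂ i, SensSet f (U i) δ).Nonempty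

/-- The NDS `f_{1,∞}` is thickly sensitive. -/
def NDSThicklySensitive (f : ℕ → X → X) : Prop :=
  ∃ δ : ℝ, 0 < δ ∧ ∀ U : Set X, IsOpen U → U.Nonempty → ThickSet (SensSet f U δ)

/-- The NDS `f_{1,∞}` is syndetically sensitive. -/
def NDSSyndeticallySensitive (f : ℕ → X → X) : Prop :=
  ∃ δ : ℝ, 0 < δ ∧ ∀ U : Set X, IsOpen U → U.Nonempty → SyndeticSet (SensSet f U δ)

/-- The NDS `f_{1,∞}` is mildly mixing: its product with every transitive NDS on a compact
metric space is transitive. -/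
def NDSMildlyMixing (f : ℕ → X → X) : Prop :=
  ∀ (Y : Type*) [MetricSpace Y] [CompactSpace Y] (g : ℕ → Y → Y),
    (∀ n : ℕ, 1 ≤ n → Continuous (g n)) → NDSTransitive g →
    NDSTransitive (fun n (p : X × Y) => (f n p.1, g n p.2))

/-- The NDS `f_{1,∞}` is Li–Yorke chaotic. -/
def LiYorkeChaotic (f : ℕ → X → X) : Prop :=
  ∃ S : Set X, ¬S.Countable ∧ ∀ x ∈ S, ∀ y ∈ S, x ≠ y →
    Filter.liminf (fun n : ℕ => dist (nds f 1 n x) (nds f 1 n y)) Filter.atTop = 0 ∧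
    0 < Filter.limsup (fun n : ℕ => dist (nds f 1 n x) (nds f 1 n y)) Filter.atTop

end MetricDefs

/-!
Choose `q` such that `f_{q+1}^k` is `δ/8`-close to `F^k` for every `k`, and a nonempty open
`V ⊆ f_1^q(U)`. Multi-sensitivity applied to the sets `(F^j ∘ f_1^q)⁻¹(V)`, `0 ≤ j ≤ p`, and to a
small open set on which `f_1^m` is `δ`-insensitive for all `m ≤ q + p`, gives a common sensitive
time `q + k` with `k > p`. As `f_1^{q+k} = f_{q+1}^k ∘ f_1^q` is close to
`F^k ∘ f_1^q = F^{k-j} ∘ (F^j ∘ f_1^q)`, and `F^{k-j}` is in turn close to `f_{q+1}^{k-j}` on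
`V ⊆ f_1^q(U)`, each of these separations is carried back to a `δ/2`-separation of two points of
`U` at time `q + k - j`. Hence `N(U, δ/2) ⊇ [q + k - p, q + k]`.
-/

open Function Metric

section Compositions

variable {X : Type*} {f : ℕ → X → X}

theorem nds_add (i k : ℕ) : ∀ l, nds f i (k + l) = nds f (i + k) l ∘ nds f i k
  | 0 => rfl
  | l + 1 => by
    rw [← add_assoc, nds, nds, nds_add i k l, add_assoc]
    rfl

theorem continuous_nds [TopologicalSpace X] {i : ℕ} (hcont : ∀ n, i ≤ n → Continuous (f n)) :
    ∀ n, Continuous (nds f i n)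
  | 0 => continuous_id
  | n + 1 => (hcont (i + n) (by omega)).comp (continuous_nds hcont n)

theorem surjective_nds {i : ℕ} (hsurj : ∀ n, i ≤ n → Surjective (f n)) :
    ∀ n, Surjective (nds f i n)
  | 0 => surjective_id
  | n + 1 => (hsurj (i + n) (by omega)).comp (surjective_nds hsurj n)

theorem FeebleOpen.exists_isOpen_subset_image_nds [TopologicalSpace X] (hfo : FeebleOpen f)
    {i : ℕ} (hi : 1 ≤ i) :
    ∀ (q : ℕ) (U : Set X), IsOpen U → U.Nonempty →
      ∃ V : Set X, IsOpen V ∧ V.Nonempty ∧ V ⊆ nds f i q '' U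
  | 0, U, hUo, hUne => ⟨U, hUo, hUne, by simp [nds]⟩
  | q + 1, U, hUo, hUne => by
    obtain ⟨V, hVo, hVne, hVU⟩ := hfo.exists_isOpen_subset_image_nds hi q U hUo hUne
    refine ⟨_, isOpen_interior, hfo (i + q) (by omega) V hVo hVne, ?_⟩
    rw [nds, image_comp]
    exact interior_subset.trans (image_mono hVU)

end Compositions

theorem TendstoUniformly.surjective_of_eventually_surjective {α X ι : Type*}
    [TopologicalSpace α] [CompactSpace α] [MetricSpace X] {p : Filter ι} [p.NeBot] {g : ι → α → X}
    {G : α → X} (h : TendstoUniformly g G p) (hG : Continuous G)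
    (hsurj : ∀ᶠ n in p, Surjective (g n)) : Surjective G := by
  intro y
  have hy : y ∈ closure (range G) := Metric.mem_closure_iff.2 fun ε hε => by
    obtain ⟨n, hn, hsn⟩ := ((tendstoUniformly_iff.1 h ε hε).and hsurj).exists
    obtain ⟨x, rfl⟩ := hsn y
    exact ⟨G x, mem_range_self x, by rw [dist_comm]; exact hn x⟩
  rwa [(isCompact_range hG).isClosed.closure_eq] at hy

section Sensitivity

variable {X : Type*} [MetricSpace X] {f : ℕ → X → X}

theorem CollectivelyConverges.exists_forall_dist_lt {F : X → X} (hcoll : CollectivelyConverges f F)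
    {ε : ℝ} (hε : 0 < ε) : ∃ r₀, ∀ r, r₀ ≤ r → ∀ k x, dist (nds f r k x) (F^[k] x) < ε := by
  obtain ⟨r₀, hr₀⟩ := hcoll ε hε
  refine ⟨r₀, fun r hr k x => ?_⟩
  rcases k with _ | k
  · simpa [nds] using hε
  · exact hr₀ r hr (k + 1) (by omega) x

theorem dist_lt_dist_add_of_forall_dist_lt {α : Type*} {g h : α → X} {ε : ℝ}
    (hgh : ∀ x, dist (g x) (h x) < ε) (x y : α) : dist (g x) (g y) < dist (h x) (h y) + 2 * ε := by
  have := dist_triangle4 (g x) (h x) (h y) (g y)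
  linarith [hgh x, hgh y, dist_comm (h y) (g y)]

theorem exists_isOpen_mem_sensSet_subset_Ici (hcont : ∀ n, Continuous (nds f 1 n)) {δ : ℝ}
    (hδ : 0 < δ) (N : ℕ) (z : X) : ∃ W, IsOpen W ∧ z ∈ W ∧ SensSet f W δ ⊆ Ici N := by
  refine ⟨⋂ m ∈ Finset.range N, nds f 1 m ⁻¹' ball (nds f 1 m z) (δ / 2),
    isOpen_biInter_finset fun m _ => isOpen_ball.preimage (hcont m),
    mem_iInter₂.2 fun m _ => mem_ball_self (half_pos hδ), ?_⟩
  rintro n ⟨-, x, hx, y, hy, hxy⟩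
  by_contra hn
  have hnN : n ∈ Finset.range N := Finset.mem_range.2 (not_le.1 hn)
  have hxz : dist (nds f 1 n x) (nds f 1 n z) < δ / 2 := mem_iInter₂.1 hx n hnN
  have hyz : dist (nds f 1 n y) (nds f 1 n z) < δ / 2 := mem_iInter₂.1 hy n hnN
  linarith [dist_triangle_right (nds f 1 n x) (nds f 1 n y) (nds f 1 n z)]

theorem mem_sensSet_of_mem_sensSet_preimage_iterate {F : X → X} {U V : Set X} {q j k : ℕ}
    {δ ε : ℝ} (hclose : ∀ k x, dist (nds f (1 + q) k x) (F^[k] x) < ε)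
    (hVU : V ⊆ nds f 1 q '' U) (hjk : j < k)
    (hn : q + k ∈ SensSet f ((F^[j] ∘ nds f 1 q) ⁻¹' V) (δ + 4 * ε)) :
    q + (k - j) ∈ SensSet f U δ := by
  obtain ⟨-, x, hx, y, hy, hxy⟩ := hn
  obtain ⟨u, hu, hux⟩ := hVU hx
  obtain ⟨v, hv, hvy⟩ := hVU hy
  refine ⟨by omega, u, hu, v, hv, ?_⟩
  have hsplit : ∀ l w, nds f 1 (q + l) w = nds f (1 + q) l (nds f 1 q w) := fun l w => by
    rw [nds_add]; rfl
  have hiter : ∀ w, F^[k] w = F^[k - j] (F^[j] w) := fun w => by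
    rw [← iterate_add_apply, Nat.sub_add_cancel hjk.le]
  have hclose' : ∀ x, dist (F^[k - j] x) (nds f (1 + q) (k - j) x) < ε := fun x => by
    rw [dist_comm]; exact hclose _ x
  simp only [comp_apply] at hux hvy
  have hsep : δ + 4 * ε < dist (nds f 1 (q + (k - j)) u) (nds f 1 (q + (k - j)) v) + 4 * ε :=
    calc δ + 4 * ε < dist (nds f 1 (q + k) x) (nds f 1 (q + k) y) := hxy
      _ < dist (F^[k - j] (F^[j] (nds f 1 q x))) (F^[k - j] (F^[j] (nds f 1 q y))) + 2 * ε := by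
        rw [hsplit, hsplit, ← hiter, ← hiter]
        exact dist_lt_dist_add_of_forall_dist_lt (hclose k) _ _
      _ < dist (nds f 1 (q + (k - j)) u) (nds f 1 (q + (k - j)) v) + 4 * ε := by
        rw [hsplit, hsplit, hux, hvy]
        linarith [dist_lt_dist_add_of_forall_dist_lt hclose' (F^[j] (nds f 1 q x))
          (F^[j] (nds f 1 q y))]
  linarith

end Sensitivity

theorem multiSensitive_implies_thicklySensitive {X : Type*} [MetricSpace X] [CompactSpace X]
    (f : ℕ → X → X) (F : X → X)
    (hcont : ∀ n : ℕ, 1 ≤ n → Continuous (f n))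
    (hfo : FeebleOpen f)
    (hsurj : ∀ n : ℕ, 1 ≤ n → Function.Surjective (f n))
    (hF : Continuous F)
    (hunif : TendstoUniformly (fun n x => f n x) F Filter.atTop)
    (hcoll : CollectivelyConverges f F)
    (hms : NDSMultiSensitive f) :
    NDSThicklySensitive f := by
  obtain ⟨δ, hδ, hms⟩ := hms
  refine ⟨δ / 2, half_pos hδ, fun U hUo hUne p => ?_⟩
  obtain ⟨q, hq⟩ := hcoll.exists_forall_dist_lt (ε := δ / 8) (by positivity)
  have hclose : ∀ k x, dist (nds f (1 + q) k x) (F^[k] x) < δ / 8 := hq (1 + q) (by omega)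
  obtain ⟨V, hVo, hVne, hVU⟩ := hfo.exists_isOpen_subset_image_nds le_rfl q U hUo hUne
  obtain ⟨W, hWo, hzW, hWlate⟩ :=
    exists_isOpen_mem_sensSet_subset_Ici (continuous_nds hcont) hδ (q + p + 1) hUne.some
  have hFsurj : Surjective F :=
    hunif.surjective_of_eventually_surjective hF (eventually_atTop.2 ⟨1, hsurj⟩)
  set A : Fin (p + 1) → Set X := fun j => (F^[j] ∘ nds f 1 q) ⁻¹' V
  have hAo : ∀ j, IsOpen (A j) := fun j =>
    hVo.preimage ((hF.iterate j).comp (continuous_nds hcont q))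
  have hAne : ∀ j, (A j).Nonempty := fun j =>
    ((hFsurj.iterate j).comp (surjective_nds hsurj q)).nonempty_preimage.2 hVne
  obtain ⟨n, hn⟩ := hms (p + 2) (by omega) (Fin.cons W A)
    (Fin.forall_fin_succ.2 ⟨hWo, hAo⟩) (Fin.forall_fin_succ.2 ⟨⟨_, hzW⟩, hAne⟩)
  obtain ⟨hnW, hnA⟩ := Fin.forall_fin_succ.1 (mem_iInter.1 hn)
  have hlate : q + p + 1 ≤ n := hWlate hnW
  obtain ⟨k, rfl⟩ : ∃ k, n = q + k := ⟨n - q, by omega⟩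
  refine ⟨q + (k - p), fun t ht₁ ht₂ => ?_⟩
  obtain ⟨j, hj, rfl⟩ : ∃ j ≤ p, t = q + (k - j) := ⟨q + k - t, by omega, by omega⟩
  refine mem_sensSet_of_mem_sensSet_preimage_iterate hclose hVU (by omega) ?_
  rw [show δ / 2 + 4 * (δ / 8) = δ by ring]
  exact hnA ⟨j, by omega⟩
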